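/- For R > 1 define I(R) := −∫₀¹ 2·((r·e^{iπ/3})³ + 1)^{1/2} · e^{iπ/3} dr + ∫₀^R 2·((r·e^{iπ/5})³ + 1)^{1/2} · e^{iπ/5} dr, i.e., the integral of 2·(s³+1)^{1/2} along the straight segment from e^{iπ/3} to 0 followed by the straight segment from 0 to R·e^{iπ/5}, with the principal branch of the square root. Then lim_{R → ∞} ( I(R) − (4/5)·i·R^{5/2} ) = (3/5 − (√3/5)·i)·𝔅. -/

import Mathlib

open Filter Topology intervalIntegral MeasureTheory Set Complex

noncomputable section

/-- The Beta value `B(1/2, 1/3)`. -/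
def BetaB : ℝ := Real.Gamma (1 / 2) * Real.Gamma (1 / 3) / Real.Gamma (5 / 6)

/-- The integral of `2 (s³ + 1)^{1/2}` along the segment from `e^{iπ/3}` to `0`,
followed by the segment from `0` to `R e^{iπ/5}` (principal square root). -/
def Iseg (R : ℝ) : ℂ :=
  -(∫ r in (0:ℝ)..1,
      2 * ((((r : ℂ) * Complex.exp ((Real.pi : ℂ) * Complex.I / 3)) ^ 3 + 1) ^ ((1 : ℂ) / 2))
        * Complex.exp ((Real.pi : ℂ) * Complex.I / 3))
  + ∫ r in (0:ℝ)..R,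
      2 * ((((r : ℂ) * Complex.exp ((Real.pi : ℂ) * Complex.I / 5)) ^ 3 + 1) ^ ((1 : ℂ) / 2))
        * Complex.exp ((Real.pi : ℂ) * Complex.I / 5)


lemma realBeta {a b : ℝ} (ha : 0 < a) (hb : 0 < b) :
    ∫ x in (0:ℝ)..1, x ^ (a-1) * (1-x) ^ (b-1) =
      Real.Gamma a * Real.Gamma b / Real.Gamma (a+b) := by
  have key := Complex.Gamma_mul_Gamma_eq_betaIntegral (s := a) (t := b)
    (by simpa using ha) (by simpa using hb)
  have hcast : Complex.betaIntegral a b =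
      ((∫ x in (0:ℝ)..1, x ^ (a-1) * (1-x) ^ (b-1) : ℝ) : ℂ) := by
    rw [Complex.betaIntegral, ← intervalIntegral.integral_ofReal]
    refine intervalIntegral.integral_congr fun x hx => ?_
    rw [uIcc_of_le (by norm_num : (0:ℝ) ≤ 1)] at hx
    push_cast
    rw [Complex.ofReal_cpow hx.1, Complex.ofReal_cpow (by linarith [hx.2])]
    push_cast; ring
  rw [hcast, ← Complex.ofReal_add, Complex.Gamma_ofReal, Complex.Gamma_ofReal,
    Complex.Gamma_ofReal, ← Complex.ofReal_mul, ← Complex.ofReal_mul] at key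
  have := Complex.ofReal_injective key
  have hG : Real.Gamma (a+b) ≠ 0 := (Real.Gamma_pos_of_pos (by linarith)).ne'
  field_simp [this]
  linarith [this]


lemma cube_image : (fun r : ℝ => r ^ 3) '' Ioo 0 1 = Ioo (0:ℝ) 1 := by
  ext x
  constructor
  · rintro ⟨r, ⟨hr0, hr1⟩, rfl⟩
    exact ⟨by positivity, pow_lt_one₀ hr0.le hr1 (by norm_num)⟩
  · rintro ⟨hx0, hx1⟩
    refine ⟨x ^ ((1:ℝ)/3), ⟨by positivity, ?_⟩, ?_⟩
    · calc x ^ ((1:ℝ)/3) < 1 ^ ((1:ℝ)/3) := Real.rpow_lt_rpow hx0.le hx1 (by norm_num)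
        _ = 1 := Real.one_rpow _
    · show (x ^ ((1:ℝ)/3)) ^ (3:ℕ) = x
      rw [← Real.rpow_natCast (x ^ ((1:ℝ)/3)) 3, ← Real.rpow_mul hx0.le]
      norm_num

lemma cube_injOn : InjOn (fun r : ℝ => r ^ 3) (Ioo 0 1) := fun r₁ h₁ r₂ h₂ h =>
  (pow_left_strictMonoOn₀ (three_ne_zero)).injOn (le_of_lt h₁.1) (le_of_lt h₂.1) h

lemma int_one_sub_cube : ∫ r in (0:ℝ)..1, (1 - r^3) ^ ((1:ℝ)/2) = BetaB / 5 := by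
  have h1 : ∫ r in (0:ℝ)..1, (1 - r^3) ^ ((1:ℝ)/2)
      = ∫ r in Ioo (0:ℝ) 1, (1 - r^3) ^ ((1:ℝ)/2) := by
    rw [intervalIntegral.integral_of_le (by norm_num), integral_Ioc_eq_integral_Ioo]
  have key := integral_image_eq_integral_abs_deriv_smul (s := Ioo (0:ℝ) 1)
    (f := fun r : ℝ => r ^ 3) (f' := fun r => 3 * r ^ 2) measurableSet_Ioo
    (fun r _ => ((hasDerivAt_pow 3 r).congr_deriv (by ring)).hasDerivWithinAt)
    cube_injOn (fun x => (1/3 : ℝ) * (x ^ ((1:ℝ)/3 - 1) * (1-x) ^ ((3:ℝ)/2 - 1)))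
  rw [cube_image] at key
  have h2 : ∫ r in Ioo (0:ℝ) 1,
      |3 * r ^ 2| • ((1/3 : ℝ) * ((r^3) ^ ((1:ℝ)/3 - 1) * (1-r^3) ^ ((3:ℝ)/2 - 1)))
      = ∫ r in Ioo (0:ℝ) 1, (1 - r^3) ^ ((1:ℝ)/2) := by
    refine setIntegral_congr_fun measurableSet_Ioo fun r hr => ?_
    have hr0 : (0:ℝ) < r := hr.1
    have hcube : (r ^ 3 : ℝ) ^ ((1:ℝ)/3 - 1) = r ^ (-(2:ℝ)) := by
      rw [← Real.rpow_natCast r 3, ← Real.rpow_mul hr0.le]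
      norm_num
    rw [smul_eq_mul, hcube, _root_.abs_of_nonneg (by positivity), Real.rpow_neg hr0.le,
      show ((3:ℝ)/2 - 1) = (1:ℝ)/2 by norm_num]
    have h2' : r ^ (-(2:ℝ)) = (r ^ (2:ℕ))⁻¹ := by
      rw [Real.rpow_neg hr0.le, ← Real.rpow_natCast r 2]
      norm_num
    rw [Real.rpow_neg hr0.le] at hcube
    have hrr : r ^ (2:ℝ) = r ^ (2:ℕ) := by rw [← Real.rpow_natCast r 2]; norm_num
    rw [hrr]
    field_simp
  have h3 : ∫ x in Ioo (0:ℝ) 1, (1/3 : ℝ) * (x ^ ((1:ℝ)/3 - 1) * (1-x) ^ ((3:ℝ)/2 - 1))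
      = (1/3) * ∫ x in (0:ℝ)..1, x ^ ((1:ℝ)/3 - 1) * (1-x) ^ ((3:ℝ)/2 - 1) := by
    rw [MeasureTheory.integral_const_mul, intervalIntegral.integral_of_le (by norm_num),
      integral_Ioc_eq_integral_Ioo]
  have hbeta := realBeta (a := 1/3) (b := 3/2) (by norm_num) (by norm_num)
  have hG12 : Real.Gamma (3/2) = (1/2) * Real.Gamma (1/2) := by
    have := Real.Gamma_add_one (s := 1/2) (by norm_num)
    rw [show (1:ℝ)/2 + 1 = 3/2 by norm_num] at this
    linarith
  have hG56 : Real.Gamma (1/3 + 3/2) = (5/6) * Real.Gamma (5/6) := by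
    have := Real.Gamma_add_one (s := 5/6) (by norm_num)
    rw [show (5:ℝ)/6 + 1 = 11/6 by norm_num] at this
    rw [show (1:ℝ)/3 + 3/2 = 11/6 by norm_num]
    linarith
  have hpos : (0:ℝ) < Real.Gamma (5/6) := Real.Gamma_pos_of_pos (by norm_num)
  rw [h1, ← h2, ← key, h3, hbeta, hG12, hG56, BetaB]
  field_simp
  ring


-- the map x ↦ x³/(1+x³) from (0,∞) onto (0,1)
lemma phi_image : (fun x : ℝ => x^3 / (1 + x^3)) '' Ioi 0 = Ioo (0:ℝ) 1 := by
  ext u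
  constructor
  · rintro ⟨x, hx, rfl⟩
    have hx : (0:ℝ) < x := hx
    have h1 : (0:ℝ) < 1 + x^3 := by positivity
    constructor
    · positivity
    · rw [div_lt_one h1]; nlinarith
  · rintro ⟨hu0, hu1⟩
    have h1u : (0:ℝ) < 1 - u := by linarith
    refine ⟨(u / (1-u)) ^ ((1:ℝ)/3), mem_Ioi.mpr (by positivity), ?_⟩
    have hcube : ((u / (1-u)) ^ ((1:ℝ)/3)) ^ (3:ℕ) = u / (1-u) := by
      rw [← Real.rpow_natCast ((u / (1-u)) ^ ((1:ℝ)/3)) 3, ← Real.rpow_mul (by positivity)]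
      norm_num
    show ((u / (1-u)) ^ ((1:ℝ)/3)) ^ (3:ℕ) / (1 + ((u / (1-u)) ^ ((1:ℝ)/3)) ^ (3:ℕ)) = u
    rw [hcube]
    field_simp
    ring

lemma phi_injOn : InjOn (fun x : ℝ => x^3 / (1 + x^3)) (Ioi 0) := by
  intro x hx y hy h
  simp only at h
  have hx : (0:ℝ) < x := hx
  have hy : (0:ℝ) < y := hy
  have h1x : (0:ℝ) < 1 + x^3 := by positivity
  have h1y : (0:ℝ) < 1 + y^3 := by positivity
  rw [div_eq_div_iff h1x.ne' h1y.ne'] at h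
  have h3 : x^3 = y^3 := by ring_nf at h ⊢; linarith
  exact (pow_left_strictMonoOn₀ three_ne_zero).injOn hx.le hy.le h3

lemma phi_deriv (x : ℝ) (hx : x ∈ Ioi (0:ℝ)) :
    HasDerivWithinAt (fun x : ℝ => x^3 / (1 + x^3))
      (3*x^2 / (1+x^3)^2) (Ioi 0) x := by
  have hx : (0:ℝ) < x := hx
  have h1 : (1 + x^3) ≠ 0 := by positivity
  have := ((hasDerivAt_pow 3 x).div ((hasDerivAt_pow 3 x).const_add 1) h1)
  refine (this.congr_deriv ?_).hasDerivWithinAt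
  field_simp
  ring

lemma int_inv_sqrt_val :
    ∫ x in Ioi (0:ℝ), (1 + x^3) ^ (-(1:ℝ)/2)
      = (1/3) * (Real.Gamma (1/3) * Real.Gamma (1/6) / Real.Gamma (1/2)) := by
  have key := integral_image_eq_integral_abs_deriv_smul (s := Ioi (0:ℝ))
    (f := fun x : ℝ => x^3 / (1 + x^3)) (f' := fun x => 3*x^2 / (1+x^3)^2)
    measurableSet_Ioi phi_deriv phi_injOn
    (fun u => (1/3 : ℝ) * (u ^ ((1:ℝ)/3 - 1) * (1-u) ^ ((1:ℝ)/6 - 1)))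
  rw [phi_image] at key
  have h2 : ∫ x in Ioi (0:ℝ),
      |3*x^2 / (1+x^3)^2| • ((1/3 : ℝ) * ((x^3/(1+x^3)) ^ ((1:ℝ)/3 - 1)
        * (1-(x^3/(1+x^3))) ^ ((1:ℝ)/6 - 1)))
      = ∫ x in Ioi (0:ℝ), (1 + x^3) ^ (-(1:ℝ)/2) := by
    refine setIntegral_congr_fun measurableSet_Ioi fun x hx => ?_
    have hx : (0:ℝ) < x := hx
    have hp : (0:ℝ) < 1 + x^3 := by positivity
    have e1 : (1:ℝ) - x^3/(1+x^3) = (1+x^3)⁻¹ := by field_simp; ring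
    have e2 : (x^3/(1+x^3)) ^ ((1:ℝ)/3 - 1)
        = (x ^ (3:ℕ)) ^ (-(2:ℝ)/3) * (1+x^3) ^ ((2:ℝ)/3) := by
      rw [div_eq_mul_inv, Real.mul_rpow (by positivity) (by positivity),
        ← Real.rpow_neg_one (1+x^3), ← Real.rpow_mul hp.le]
      norm_num
    have e3 : (x ^ (3:ℕ)) ^ (-(2:ℝ)/3) = (x^(2:ℕ))⁻¹ := by
      rw [← Real.rpow_natCast x 3, ← Real.rpow_mul hx.le, ← Real.rpow_natCast x 2,
        ← Real.rpow_neg hx.le]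
      norm_num
    have e4 : ((1+x^3)⁻¹) ^ ((1:ℝ)/6 - 1) = (1+x^3) ^ ((5:ℝ)/6) := by
      rw [← Real.rpow_neg_one (1+x^3), ← Real.rpow_mul hp.le]
      norm_num
    rw [smul_eq_mul, e1, e2, e3, e4, _root_.abs_of_nonneg (by positivity)]
    have e5 : (1+x^3) ^ ((2:ℝ)/3) * (1+x^3) ^ ((5:ℝ)/6) / (1+x^3)^(2:ℕ)
        = (1 + x^3) ^ (-(1:ℝ)/2) := by
      rw [← Real.rpow_add hp, ← Real.rpow_natCast (1+x^3) 2, ← Real.rpow_sub hp]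
      norm_num
    rw [← e5]
    field_simp
  have h3 : ∫ u in Ioo (0:ℝ) 1, (1/3 : ℝ) * (u ^ ((1:ℝ)/3 - 1) * (1-u) ^ ((1:ℝ)/6 - 1))
      = (1/3) * ∫ u in (0:ℝ)..1, u ^ ((1:ℝ)/3 - 1) * (1-u) ^ ((1:ℝ)/6 - 1) := by
    rw [MeasureTheory.integral_const_mul, intervalIntegral.integral_of_le (by norm_num),
      integral_Ioc_eq_integral_Ioo]
  have hbeta := realBeta (a := 1/3) (b := 1/6) (by norm_num) (by norm_num)
  rw [← h2, ← key, h3, hbeta, show (1:ℝ)/3 + 1/6 = 1/2 by norm_num]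


lemma contOn_inv_sqrt : ContinuousOn (fun x : ℝ => (1 + x^3) ^ (-(1:ℝ)/2)) (Ici 0) := by
  refine ContinuousOn.rpow_const (by fun_prop) fun x hx => Or.inl ?_
  have : (0:ℝ) ≤ x := hx
  positivity

def gR (x : ℝ) : ℝ := 2 * (1 + x^3) ^ ((1:ℝ)/2) - 2 * x ^ ((3:ℝ)/2)

lemma gR_contOn : ContinuousOn gR (Ici 0) := by
  refine ContinuousOn.sub ?_ ?_
  · refine continuous_const.continuousOn.mul
      (ContinuousOn.rpow_const (by fun_prop) fun x hx => Or.inl ?_)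
    have : (0:ℝ) ≤ x := hx
    positivity
  · exact continuous_const.continuousOn.mul
      ((continuousOn_id).rpow_const fun x _ => Or.inr (by norm_num))

lemma int_inv_sqrt_integrable :
    IntegrableOn (fun x : ℝ => (1 + x^3) ^ (-(1:ℝ)/2)) (Ioi 0) := by
  have hsplit : Ioi (0:ℝ) = Ioc 0 1 ∪ Ioi 1 := by
    rw [Ioc_union_Ioi_eq_Ioi]; norm_num
  rw [hsplit]
  refine IntegrableOn.union ?_ ?_
  · exact ((contOn_inv_sqrt.mono (Icc_subset_Ici_self)).integrableOn_Icc).mono_set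
      Ioc_subset_Icc_self
  · refine Integrable.mono' (g := fun x : ℝ => x ^ (-(3:ℝ)/2))
      (integrableOn_Ioi_rpow_of_lt (by norm_num) one_pos)
      ((contOn_inv_sqrt.mono fun x (hx : (1:ℝ) < x) => le_of_lt (lt_trans one_pos hx)).aestronglyMeasurable
        measurableSet_Ioi) ?_
    filter_upwards [ae_restrict_mem measurableSet_Ioi] with x hx
    have hx : (1:ℝ) < x := hx
    have h0 : (0:ℝ) < x := by linarith
    rw [Real.norm_eq_abs, _root_.abs_of_nonneg (by positivity)]
    have : x ^ (-(3:ℝ)/2) = (x^(3:ℕ)) ^ (-(1:ℝ)/2) := by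
      rw [← Real.rpow_natCast x 3, ← Real.rpow_mul h0.le]; norm_num
    rw [this]
    apply Real.rpow_le_rpow_of_nonpos (by positivity) (by nlinarith) (by norm_num)

lemma ftc_H {R : ℝ} (hR : 0 ≤ R) :
    ∫ x in (0:ℝ)..R, (gR x - (6/5) * (1 + x^3) ^ (-(1:ℝ)/2))
      = (4/5) * (R * (1 + R^3) ^ ((1:ℝ)/2) - R ^ ((5:ℝ)/2)) := by
  have key : ∀ x ∈ Set.uIcc (0:ℝ) R,
      HasDerivAt (fun x : ℝ => (4/5) * (x * (1 + x^3) ^ ((1:ℝ)/2) - x ^ ((5:ℝ)/2)))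
        (gR x - (6/5) * (1 + x^3) ^ (-(1:ℝ)/2)) x := by
    intro x hx
    rw [uIcc_of_le hR] at hx
    have hx0 : (0:ℝ) ≤ x := hx.1
    have hp : (0:ℝ) < 1 + x^3 := by positivity
    have d1 : HasDerivAt (fun x : ℝ => (1 + x^3) ^ ((1:ℝ)/2))
        ((1/2) * (1 + x^3) ^ (-(1:ℝ)/2) * (3*x^2)) x := by
      have dbase : HasDerivAt (fun x : ℝ => 1 + x^3) (3*x^2) x := by
        simpa using ((hasDerivAt_pow 3 x).const_add 1).congr_deriv (by ring)
      have := (Real.hasDerivAt_rpow_const (p := (1:ℝ)/2) (Or.inl hp.ne')).comp x dbase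
      refine this.congr_deriv ?_
      rw [show (1:ℝ)/2 - 1 = -(1:ℝ)/2 by norm_num]
    have d2 : HasDerivAt (fun x : ℝ => x ^ ((5:ℝ)/2)) ((5/2) * x ^ ((3:ℝ)/2)) x := by
      have := Real.hasDerivAt_rpow_const (x := x) (p := (5:ℝ)/2) (Or.inr (by norm_num))
      refine this.congr_deriv ?_
      norm_num
    have d3 := ((hasDerivAt_id x).mul d1).sub d2
    refine (((d3).const_mul ((4:ℝ)/5)).congr_deriv ?_)
    have e1 : (1 + x^3) ^ ((1:ℝ)/2) = (1 + x^3) * (1 + x^3) ^ (-(1:ℝ)/2) := by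
      rw [show ((1:ℝ)/2) = 1 + (-(1:ℝ)/2) by norm_num, Real.rpow_add hp, Real.rpow_one]
    rw [gR, e1]
    simp only [id_eq]
    ring
  rw [intervalIntegral.integral_eq_sub_of_hasDerivAt key ?_]
  · rw [Real.zero_rpow (by norm_num)]
    norm_num
  · apply ContinuousOn.intervalIntegrable
    have : Set.uIcc (0:ℝ) R ⊆ Ici 0 := by rw [uIcc_of_le hR]; exact Icc_subset_Ici_self
    exact (gR_contOn.mono this).sub
      (continuousOn_const.mul (contOn_inv_sqrt.mono this))


lemma gR_decomp {R : ℝ} (hR : 0 ≤ R) :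
    ∫ x in (0:ℝ)..R, gR x
      = (4/5) * (R * (1 + R^3) ^ ((1:ℝ)/2) - R ^ ((5:ℝ)/2))
        + (6/5) * ∫ x in (0:ℝ)..R, (1 + x^3) ^ (-(1:ℝ)/2) := by
  have hsub : Set.uIcc (0:ℝ) R ⊆ Ici 0 := by rw [uIcc_of_le hR]; exact Icc_subset_Ici_self
  have h1 : IntervalIntegrable gR volume 0 R :=
    (gR_contOn.mono hsub).intervalIntegrable
  have h2 : IntervalIntegrable (fun x : ℝ => (6/5) * (1 + x^3) ^ (-(1:ℝ)/2)) volume 0 R :=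
    (continuousOn_const.mul (contOn_inv_sqrt.mono hsub)).intervalIntegrable
  have := intervalIntegral.integral_sub h1 h2
  rw [ftc_H hR] at this
  rw [intervalIntegral.integral_const_mul] at this
  linarith

lemma gamma_arith :
    (6/5) * ((1/3) * (Real.Gamma (1/3) * Real.Gamma (1/6) / Real.Gamma (1/2)))
      = (4/5) * BetaB := by
  have hrefl := Real.Gamma_mul_Gamma_one_sub (1/6)
  rw [show (1:ℝ) - 1/6 = 5/6 by norm_num] at hrefl
  rw [show Real.pi * (1/6) = Real.pi/6 by ring, Real.sin_pi_div_six] at hrefl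
  have h12 : Real.Gamma (1/2) = Real.sqrt Real.pi := Real.Gamma_one_half_eq
  have hsq : Real.sqrt Real.pi * Real.sqrt Real.pi = Real.pi :=
    Real.mul_self_sqrt Real.pi_pos.le
  have h56 : (0:ℝ) < Real.Gamma (5/6) := Real.Gamma_pos_of_pos (by norm_num)
  have hs : (0:ℝ) < Real.sqrt Real.pi := Real.sqrt_pos.mpr Real.pi_pos
  rw [BetaB, h12]
  have h16 : Real.Gamma (1/6) = 2 * Real.pi / Real.Gamma (5/6) := by
    field_simp at hrefl ⊢
    linarith
  rw [h16]
  field_simp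
  linear_combination (-12 : ℝ) * hsq

lemma tendsto_bdry : Tendsto
    (fun R : ℝ => (4/5) * (R * (1 + R^3) ^ ((1:ℝ)/2) - R ^ ((5:ℝ)/2))) atTop (𝓝 0) := by
  have hb : Tendsto (fun R : ℝ => R ^ (-(1:ℝ)/2)) atTop (𝓝 0) := by
    have := tendsto_rpow_neg_atTop (y := (1:ℝ)/2) (by norm_num)
    refine this.congr fun R => by rw [neg_div]
  have key : ∀ᶠ R : ℝ in atTop,
      (R * (1 + R^3) ^ ((1:ℝ)/2) - R ^ ((5:ℝ)/2)) ∈ Icc 0 (R ^ (-(1:ℝ)/2)) := by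
    filter_upwards [eventually_ge_atTop 1] with R hR
    have hR0 : (0:ℝ) < R := lt_of_lt_of_le one_pos hR
    set A := (1 + R^3) ^ ((1:ℝ)/2) with hA
    set B := R ^ ((3:ℝ)/2) with hB
    have hAp : (0:ℝ) < A := Real.rpow_pos_of_pos (by positivity) _
    have hBp : (0:ℝ) < B := Real.rpow_pos_of_pos hR0 _
    have hA2 : A * A = 1 + R^3 := by
      rw [hA, ← Real.rpow_add (by positivity)]; norm_num
    have hB2 : B * B = R^3 := by
      rw [hB, ← Real.rpow_add hR0, ← Real.rpow_natCast R 3]; norm_num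
    have hRB : R ^ ((5:ℝ)/2) = R * B := by
      rw [hB, show (5:ℝ)/2 = 1 + 3/2 by norm_num, Real.rpow_add hR0, Real.rpow_one]
    have hdiff : A - B = 1 / (A + B) := by
      rw [eq_div_iff (by positivity)]
      nlinarith
    constructor
    · have : B ≤ A := by nlinarith
      rw [hRB]; nlinarith
    · rw [hRB, ← mul_sub, hdiff]
      have h1 : R * (1 / (A + B)) ≤ R * (1 / B) := by
        apply mul_le_mul_of_nonneg_left _ hR0.le
        apply one_div_le_one_div_of_le hBp
        linarith
      refine le_trans h1 ?_
      rw [mul_one_div, le_iff_lt_or_eq]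
      right
      rw [show -(1:ℝ)/2 = (1:ℝ) - 3/2 by norm_num, Real.rpow_sub hR0, Real.rpow_one, hB]
  have h0 : Tendsto (fun R : ℝ => R * (1 + R^3) ^ ((1:ℝ)/2) - R ^ ((5:ℝ)/2)) atTop (𝓝 0) := by
    refine tendsto_of_tendsto_of_tendsto_of_le_of_le' tendsto_const_nhds hb ?_ ?_
    · filter_upwards [key] with R h using h.1
    · filter_upwards [key] with R h using h.2
  simpa using h0.const_mul ((4:ℝ)/5)

lemma tendsto_gR : Tendsto (fun R : ℝ => ∫ x in (0:ℝ)..R, gR x) atTop (𝓝 ((4/5) * BetaB)) := by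
  have h2 : Tendsto (fun R : ℝ => (6/5) * ∫ x in (0:ℝ)..R, (1 + x^3) ^ (-(1:ℝ)/2)) atTop
      (𝓝 ((6/5) * ((1/3) * (Real.Gamma (1/3) * Real.Gamma (1/6) / Real.Gamma (1/2))))) := by
    have := intervalIntegral_tendsto_integral_Ioi (μ := volume) 0 int_inv_sqrt_integrable
      tendsto_id
    rw [int_inv_sqrt_val] at this
    exact this.const_mul _
  have hsum := tendsto_bdry.add h2
  rw [zero_add, gamma_arith] at hsum
  refine Tendsto.congr' ?_ hsum
  filter_upwards [eventually_ge_atTop 0] with R hR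
  exact (gR_decomp hR).symm


def G (s : ℂ) : ℂ := 2 * (s^3 + 1) ^ ((1:ℂ)/2) - 2 * s ^ ((3:ℂ)/2)

def CC : ℝ := 2 / Real.cos (3 * Real.pi / 10)

lemma cos_pos_310 : 0 < Real.cos (3 * Real.pi / 10) := by
  apply Real.cos_pos_of_mem_Ioo
  constructor <;> nlinarith [Real.pi_pos]

lemma CC_pos : 0 < CC := div_pos two_pos cos_pos_310

-- cube of exp
lemma exp_cube (z : ℂ) : (Complex.exp z) ^ (3:ℕ) = Complex.exp (3 * z) := by
  rw [← Complex.exp_nat_mul]; norm_num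

lemma sector_slit1 {z : ℂ} (h0 : 0 ≤ z.im) (h1 : z.im ≤ Real.pi / 5) :
    Complex.exp z ∈ Complex.slitPlane := by
  rw [Complex.mem_slitPlane_iff]
  left
  rw [Complex.exp_re]
  have : 0 < Real.cos z.im := by
    apply Real.cos_pos_of_mem_Ioo
    constructor <;> nlinarith [Real.pi_pos]
  positivity

lemma sector_slit2 {z : ℂ} (h0 : 0 ≤ z.im) (h1 : z.im ≤ Real.pi / 5) :
    (Complex.exp z) ^ (3:ℕ) + 1 ∈ Complex.slitPlane := by
  rw [Complex.mem_slitPlane_iff, exp_cube]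
  have him : (Complex.exp (3*z) + 1).im = Real.exp (3*z.re) * Real.sin (3*z.im) := by
    simp [Complex.exp_im]
  rcases eq_or_lt_of_le h0 with h | h
  · left
    have : (Complex.exp (3*z)).re = Real.exp (3*z.re) * Real.cos (3*z.im) := by
      simp [Complex.exp_re]
    simp only [Complex.add_re, Complex.one_re, this, ← h]
    norm_num
    positivity
  · right
    rw [him]
    have hs : 0 < Real.sin (3*z.im) := by
      apply Real.sin_pos_of_pos_of_lt_pi (by linarith)
      nlinarith [Real.pi_pos]
    positivity

lemma sector_ne {z : ℂ} (h0 : 0 ≤ z.im) (h1 : z.im ≤ Real.pi / 5) :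
    (Complex.exp z) ^ (3:ℕ) + 1 ≠ 0 :=
  Complex.slitPlane_ne_zero (sector_slit2 h0 h1)

lemma G_diffAt {s : ℂ} (hs : s ∈ Complex.slitPlane) (hs3 : s^3 + 1 ∈ Complex.slitPlane) :
    DifferentiableAt ℂ G s := by
  apply DifferentiableAt.sub
  · apply DifferentiableAt.const_mul
    exact DifferentiableAt.cpow ((differentiableAt_pow 3).add_const 1)
      (differentiableAt_const _) hs3
  · exact ((differentiableAt_id.cpow (differentiableAt_const _) hs)).const_mul 2

-- main decay bound
lemma G_decay {z : ℂ} (h0 : 0 ≤ z.im) (h1 : z.im ≤ Real.pi / 5) :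
    ‖G (Complex.exp z)‖ ≤ CC * Real.exp (-(3/2) * z.re) := by
  set s := Complex.exp z with hs
  have hsne : s ≠ 0 := Complex.exp_ne_zero z
  have hu : s ^ (3:ℕ) + 1 ≠ 0 := sector_ne h0 h1
  have hpi5 : Real.pi / 5 ≤ Real.pi := by nlinarith [Real.pi_pos]
  have hlog : Complex.log s = z := Complex.log_exp (by nlinarith [Real.pi_pos]) (by linarith)
  -- w2 = s^{3/2}
  have hw2 : s ^ ((3:ℂ)/2) = Complex.exp (z * (3/2)) := by
    rw [Complex.cpow_def_of_ne_zero hsne, hlog]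
  set w₁ : ℂ := (s^3 + 1) ^ ((1:ℂ)/2) with hw₁
  set w₂ : ℂ := Complex.exp (z * (3/2)) with hw₂def
  have hu' : s ^ 3 + 1 ≠ 0 := by exact_mod_cast hu
  have hw1sq : w₁ * w₁ = s^3 + 1 := by
    rw [hw₁, Complex.cpow_def_of_ne_zero hu', ← Complex.exp_add, ← mul_add]
    norm_num
    exact Complex.exp_log hu'
  have hw2sq : w₂ * w₂ = s^3 := by
    rw [hw₂def, ← Complex.exp_add, show z * (3/2) + z * (3/2) = 3 * z by ring]
    rw [show s^3 = s^(3:ℕ) by norm_num, exp_cube]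
  -- real part bounds
  have hrew1 : 0 ≤ w₁.re := by
    rw [hw₁, Complex.cpow_def_of_ne_zero hu', Complex.exp_re]
    have harg : (Complex.log (s^3+1) * ((1:ℂ)/2)).im = (s^3+1).arg / 2 := by
      simp [Complex.log_im]
      ring
    rw [harg]
    have := Complex.neg_pi_lt_arg (s^3+1)
    have := Complex.arg_le_pi (s^3+1)
    have hcos : 0 ≤ Real.cos ((s^3+1).arg / 2) :=
      Real.cos_nonneg_of_mem_Icc ⟨by linarith, by linarith⟩
    positivity
  have hrew2 : Real.exp ((3/2) * z.re) * Real.cos (3*Real.pi/10) ≤ w₂.re := by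
    rw [hw₂def, Complex.exp_re]
    have him : (z * (3/2)).im = (3/2) * z.im := by simp; ring
    have hre : (z * (3/2)).re = (3/2) * z.re := by simp; ring
    rw [him, hre]
    have hcos : Real.cos (3*Real.pi/10) ≤ Real.cos ((3/2) * z.im) := by
      apply Real.cos_le_cos_of_nonneg_of_le_pi (by positivity) (by nlinarith [Real.pi_pos])
      nlinarith
    have := Real.exp_pos ((3/2)*z.re)
    nlinarith
  have hsumre : 0 < (w₁ + w₂).re := by
    rw [Complex.add_re]
    have := Real.exp_pos ((3/2)*z.re)
    nlinarith [cos_pos_310]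
  have hsumne : w₁ + w₂ ≠ 0 := fun h => by simp [h] at hsumre
  have hdiff : w₁ - w₂ = (w₁ + w₂)⁻¹ := by
    refine eq_inv_of_mul_eq_one_right ?_
    linear_combination hw1sq - hw2sq
  have hGs : G s = 2 * (w₁ - w₂) := by
    rw [G, hw2, hw₁]
    ring
  rw [hGs, hdiff, norm_mul, norm_inv]
  have hnorm2 : ‖(2:ℂ)‖ = 2 := by norm_num
  rw [hnorm2]
  have hlow : Real.exp ((3/2) * z.re) * Real.cos (3*Real.pi/10) ≤ ‖w₁ + w₂‖ := by
    refine le_trans ?_ (Complex.re_le_norm (w₁ + w₂))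
    rw [Complex.add_re]
    linarith
  have hlowpos : 0 < Real.exp ((3/2) * z.re) * Real.cos (3*Real.pi/10) :=
    mul_pos (Real.exp_pos _) cos_pos_310
  have : CC * Real.exp (-(3/2) * z.re)
      = 2 / (Real.exp ((3/2) * z.re) * Real.cos (3*Real.pi/10)) := by
    rw [CC, show -(3/2) * z.re = -((3/2) * z.re) by ring, Real.exp_neg]
    field_simp
  rw [this, div_eq_mul_inv]
  gcongr


def w5 : ℂ := Complex.exp ((Real.pi : ℂ) * Complex.I / 5)
def FF (z : ℂ) : ℂ := G (Complex.exp z) * Complex.exp z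

lemma w5_im : ((Real.pi : ℂ) * Complex.I / 5).im = Real.pi / 5 := by
  simp

lemma G_small {s : ℂ} (hs : ‖s‖ ≤ 1) : ‖G s‖ ≤ 6 := by
  have h1 : ‖(s^3 + 1 : ℂ)‖ ≤ 2 := by
    calc ‖(s^3 + 1 : ℂ)‖ ≤ ‖s‖^3 + 1 := by
          refine le_trans (norm_add_le _ _) ?_
          simp [norm_pow]
        _ ≤ 2 := by nlinarith [pow_le_one₀ (norm_nonneg s) hs (n := 3)]
  have hc1 : ‖(s^3+1) ^ ((1:ℂ)/2)‖ ≤ 2 := by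
    refine le_trans (Complex.norm_cpow_le _ _) ?_
    simp only [Complex.div_re, Complex.one_re, Complex.div_im, Complex.one_im]
    norm_num
    calc ‖s^3+1‖ ^ ((1:ℝ)/2) ≤ (2:ℝ) ^ ((1:ℝ)/2) := by
          apply Real.rpow_le_rpow (by positivity) h1 (by norm_num)
        _ ≤ (2:ℝ) ^ ((1:ℝ)) := by
          apply Real.rpow_le_rpow_of_exponent_le one_le_two (by norm_num)
        _ = 2 := by norm_num
  have hc2 : ‖s ^ ((3:ℂ)/2)‖ ≤ 1 := by
    refine le_trans (Complex.norm_cpow_le _ _) ?_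
    simp only [Complex.div_re, Complex.one_re, Complex.div_im, Complex.one_im]
    norm_num
    calc ‖s‖ ^ ((3:ℝ)/2) ≤ (1:ℝ) ^ ((3:ℝ)/2) := by
          apply Real.rpow_le_rpow (by positivity) hs (by norm_num)
        _ = 1 := Real.one_rpow _
  have step : ‖G s‖ ≤ ‖(2:ℂ)‖ * ‖(s^3+1) ^ ((1:ℂ)/2)‖ + ‖(2:ℂ)‖ * ‖s ^ ((3:ℂ)/2)‖ := by
    rw [← norm_mul, ← norm_mul]
    exact norm_sub_le _ _
  have h2 : ‖(2:ℂ)‖ = 2 := by norm_num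
  rw [h2] at step
  linarith

def g1c (t : ℝ) : ℂ := ((gR t : ℝ) : ℂ)
def g2c (t : ℝ) : ℂ := 2 * (((t:ℂ) * w5)^3 + 1) ^ ((1:ℂ)/2) * w5
  - 2 * Complex.I * ((t ^ ((3:ℝ)/2) : ℝ) : ℂ)

lemma g1c_eq {t : ℝ} (ht : 0 ≤ t) : g1c t = G t := by
  rw [g1c, gR, G]
  push_cast
  rw [Complex.ofReal_cpow (by positivity), Complex.ofReal_cpow ht]
  push_cast
  ring_nf

lemma w5_pow_eq (t : ℝ) (ht : 0 < t) :
    ((t:ℂ) * w5) ^ ((3:ℂ)/2) = Complex.I * ((t ^ ((3:ℝ)/2) : ℝ) : ℂ) / w5 := by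
  have hz : (t:ℂ) * w5 = Complex.exp ((Real.log t : ℂ) + (Real.pi : ℂ) * Complex.I / 5) := by
    rw [Complex.exp_add, w5, ← Complex.ofReal_exp, Real.exp_log ht]
  have him : ((Real.log t : ℂ) + (Real.pi : ℂ) * Complex.I / 5).im = Real.pi / 5 := by
    simp
  have hpi : (0:ℝ) < Real.pi := Real.pi_pos
  rw [hz, Complex.cpow_def_of_ne_zero (Complex.exp_ne_zero _),
    Complex.log_exp (by rw [him]; nlinarith) (by rw [him]; nlinarith)]
  rw [show ((Real.log t : ℂ) + (Real.pi : ℂ) * Complex.I / 5) * ((3:ℂ)/2)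
      = (((3:ℝ)/2 * Real.log t : ℝ) : ℂ) + ((Real.pi : ℂ) * Complex.I / 2
        - (Real.pi : ℂ) * Complex.I / 5) by push_cast; ring]
  rw [Complex.exp_add, Complex.exp_sub, ← Complex.ofReal_exp]
  rw [show Real.exp ((3:ℝ)/2 * Real.log t) = t ^ ((3:ℝ)/2) by
    rw [Real.rpow_def_of_pos ht]; ring_nf]
  rw [show (Real.pi : ℂ) * Complex.I / 2 = ((Real.pi/2 : ℝ) : ℂ) * Complex.I by
    push_cast; ring]
  rw [Complex.exp_mul_I]
  push_cast
  rw [show ((Real.pi:ℂ)/2) = ((Real.pi/2 : ℝ):ℂ) by push_cast; ring,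
    ← Complex.ofReal_cos, ← Complex.ofReal_sin, Real.cos_pi_div_two, Real.sin_pi_div_two, w5]
  push_cast
  ring

lemma w5_ne : w5 ≠ 0 := Complex.exp_ne_zero _

lemma g2c_eq {t : ℝ} (ht : 0 ≤ t) : g2c t = G ((t:ℂ) * w5) * w5 := by
  rcases eq_or_lt_of_le ht with h | h
  · rw [g2c, G, ← h]
    push_cast
    rw [zero_mul, Complex.zero_cpow (by norm_num : ((3:ℂ)/2) ≠ 0),
      Real.zero_rpow (by norm_num : ((3:ℝ)/2) ≠ 0)]
    push_cast
    ring
  · rw [g2c, G, w5_pow_eq t h]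
    field_simp [w5_ne]

-- slit plane facts for the ray at angle π/5
lemma ray_slit1 {t : ℝ} (ht : 0 < t) : (t:ℂ) * w5 ∈ Complex.slitPlane := by
  rw [Complex.mem_slitPlane_iff]
  left
  rw [w5, Complex.mul_re, Complex.ofReal_re, Complex.ofReal_im, Complex.exp_re]
  have him : ((Real.pi : ℂ) * Complex.I / 5).im = Real.pi / 5 := by simp
  have hre : ((Real.pi : ℂ) * Complex.I / 5).re = 0 := by simp
  rw [him, hre]
  have hpi := Real.pi_pos
  have : 0 < Real.cos (Real.pi / 5) := by
    apply Real.cos_pos_of_mem_Ioo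
    constructor <;> nlinarith
  simp only [zero_mul, sub_zero]
  positivity

lemma ray_slit2 {t : ℝ} (ht : 0 ≤ t) : ((t:ℂ) * w5)^3 + 1 ∈ Complex.slitPlane := by
  rw [Complex.mem_slitPlane_iff]
  have hw53 : ((t:ℂ) * w5)^3 = (t:ℂ)^3 * Complex.exp (3 * ((Real.pi : ℂ) * Complex.I / 5)) := by
    rw [mul_pow, w5, ← exp_cube]
  rcases eq_or_lt_of_le ht with h | h
  · left
    rw [hw53, ← h]
    norm_num
  · right
    rw [hw53]
    have him : (3 * ((Real.pi : ℂ) * Complex.I / 5)).im = 3 * Real.pi / 5 := by simp; ring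
    have hre : (3 * ((Real.pi : ℂ) * Complex.I / 5)).re = 0 := by simp
    have hpi := Real.pi_pos
    have hsin : 0 < Real.sin (3 * Real.pi / 5) := by
      apply Real.sin_pos_of_pos_of_lt_pi <;> nlinarith
    have : ((t:ℂ)^3 * Complex.exp (3 * ((Real.pi : ℂ) * Complex.I / 5)) + 1).im
        = t^3 * Real.sin (3 * Real.pi / 5) := by
      rw [Complex.add_im, Complex.one_im, add_zero, Complex.mul_im, Complex.exp_im, hre, him]
      simp [← Complex.ofReal_pow]
    rw [this]
    positivity

lemma g2c_contOn : ContinuousOn g2c (Ici 0) := by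
  apply ContinuousOn.sub
  · apply ContinuousOn.mul _ continuousOn_const
    apply ContinuousOn.mul continuousOn_const
    intro t ht
    apply ContinuousAt.continuousWithinAt
    apply ContinuousAt.comp (g := fun z : ℂ => z ^ ((1:ℂ)/2))
    · exact continuousAt_cpow_const (ray_slit2 ht)
    · fun_prop
  · apply ContinuousOn.mul continuousOn_const
    apply Complex.continuous_ofReal.comp_continuousOn
    exact continuousOn_id.rpow_const fun x _ => Or.inr (by norm_num)

lemma g1c_contOn : ContinuousOn g1c (Ici 0) :=
  Complex.continuous_ofReal.comp_continuousOn gR_contOn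

lemma pi5_nonneg : (0:ℝ) ≤ Real.pi / 5 := by positivity

lemma pi5_le_one : Real.pi / 5 ≤ 1 := by nlinarith [Real.pi_le_four]

lemma hw_cast : ((Real.pi/5 : ℝ) : ℂ) * Complex.I = (Real.pi : ℂ) * Complex.I / 5 := by
  push_cast; ring

lemma rect (a b : ℝ) :
    (∫ x in a..b, FF x)
      - (∫ x in a..b, FF (x + ((Real.pi/5 : ℝ) : ℂ) * Complex.I))
      + Complex.I • (∫ y in (0:ℝ)..(Real.pi/5), FF (b + y * Complex.I))
      - Complex.I • (∫ y in (0:ℝ)..(Real.pi/5), FF (a + y * Complex.I)) = 0 := by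
  have hdiff : DifferentiableOn ℂ FF
      (Set.uIcc ((a:ℂ)).re (((b:ℂ) + ((Real.pi/5 : ℝ) : ℂ) * Complex.I)).re ×ℂ
       Set.uIcc ((a:ℂ)).im (((b:ℂ) + ((Real.pi/5 : ℝ) : ℂ) * Complex.I)).im) := by
    intro z hz
    rw [Complex.mem_reProdIm] at hz
    obtain ⟨-, hz2⟩ := hz
    simp only [Complex.ofReal_im, Complex.add_im, Complex.mul_im, Complex.ofReal_re,
      Complex.I_im, Complex.I_re, Complex.ofReal_im, mul_zero, mul_one, zero_add, add_zero] at hz2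
    rw [Set.uIcc_of_le pi5_nonneg] at hz2
    have h0 : 0 ≤ z.im := hz2.1
    have h1 : z.im ≤ Real.pi / 5 := hz2.2
    apply DifferentiableAt.differentiableWithinAt
    exact ((G_diffAt (sector_slit1 h0 h1) (sector_slit2 h0 h1)).comp z
      Complex.differentiable_exp.differentiableAt).mul
      Complex.differentiable_exp.differentiableAt
  have key := Complex.integral_boundary_rect_eq_zero_of_differentiableOn FF (a:ℂ)
    ((b:ℂ) + ((Real.pi/5 : ℝ) : ℂ) * Complex.I) hdiff
  have hre : (((b:ℂ) + ((Real.pi/5 : ℝ) : ℂ) * Complex.I)).re = b := by simp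
  have him : (((b:ℂ) + ((Real.pi/5 : ℝ) : ℂ) * Complex.I)).im = Real.pi/5 := by simp
  have hrea : ((a:ℂ)).re = a := Complex.ofReal_re a
  have hima : ((a:ℂ)).im = 0 := Complex.ofReal_im a
  rw [hre, him, hrea, hima] at key
  simpa using key

lemma horiz1 (a b : ℝ) :
    ∫ x in a..b, FF x = ∫ t in Real.exp a..Real.exp b, g1c t := by
  have key := intervalIntegral.integral_comp_smul_deriv' (f := Real.exp) (f' := Real.exp)
    (g := g1c) (a := a) (b := b) (fun x _ => Real.hasDerivAt_exp x)
    Real.continuous_exp.continuousOn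
    (g1c_contOn.mono (by
      rintro t ⟨x, -, rfl⟩
      exact le_of_lt (Real.exp_pos x)))
  simp only [Function.comp_apply] at key
  rw [← key]
  refine intervalIntegral.integral_congr fun x _ => ?_
  rw [g1c_eq (Real.exp_pos x).le, FF, ← Complex.ofReal_exp, real_smul]
  ring

lemma horiz2 (a b : ℝ) :
    ∫ x in a..b, FF (x + ((Real.pi/5 : ℝ) : ℂ) * Complex.I)
      = ∫ t in Real.exp a..Real.exp b, g2c t := by
  have key := intervalIntegral.integral_comp_smul_deriv' (f := Real.exp) (f' := Real.exp)
    (g := g2c) (a := a) (b := b) (fun x _ => Real.hasDerivAt_exp x)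
    Real.continuous_exp.continuousOn
    (g2c_contOn.mono (by
      rintro t ⟨x, -, rfl⟩
      exact le_of_lt (Real.exp_pos x)))
  simp only [Function.comp_apply] at key
  rw [← key]
  refine intervalIntegral.integral_congr fun x _ => ?_
  rw [g2c_eq (Real.exp_pos x).le, FF, Complex.exp_add, hw_cast, ← w5, ← Complex.ofReal_exp,
    real_smul]
  ring

lemma w5_norm : ‖w5‖ = 1 := by
  rw [w5, Complex.norm_exp]
  have : ((Real.pi : ℂ) * Complex.I / 5).re = 0 := by simp
  rw [this, Real.exp_zero]

lemma vertB (c : ℝ) :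
    ‖∫ y in (0:ℝ)..(Real.pi/5), FF (c + y * Complex.I)‖
      ≤ CC * Real.exp (-(1/2) * c) * (Real.pi/5) := by
  have bound : ∀ y ∈ Set.uIoc (0:ℝ) (Real.pi/5),
      ‖FF (c + y * Complex.I)‖ ≤ CC * Real.exp (-(1/2) * c) := by
    intro y hy
    rw [Set.uIoc_of_le pi5_nonneg] at hy
    have h0 : 0 ≤ ((c:ℂ) + y * Complex.I).im := by simp [hy.1.le]
    have h1 : ((c:ℂ) + y * Complex.I).im ≤ Real.pi/5 := by simp [hy.2]
    have hre : ((c:ℂ) + y * Complex.I).re = c := by simp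
    have := G_decay h0 h1
    rw [hre] at this
    rw [FF, norm_mul, Complex.norm_exp, hre]
    calc ‖G (Complex.exp ((c:ℂ) + y * Complex.I))‖ * Real.exp c
        ≤ (CC * Real.exp (-(3/2) * c)) * Real.exp c := by
          apply mul_le_mul_of_nonneg_right this (Real.exp_pos c).le
      _ = CC * Real.exp (-(1/2) * c) := by
          rw [mul_assoc, ← Real.exp_add]
          ring_nf
  have := intervalIntegral.norm_integral_le_of_norm_le_const bound
  calc ‖∫ y in (0:ℝ)..(Real.pi/5), FF (c + y * Complex.I)‖
      ≤ CC * Real.exp (-(1/2) * c) * |Real.pi/5 - 0| := this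
    _ = CC * Real.exp (-(1/2) * c) * (Real.pi/5) := by
        rw [sub_zero, _root_.abs_of_nonneg pi5_nonneg]

lemma vertA {c : ℝ} (hc : c ≤ 0) :
    ‖∫ y in (0:ℝ)..(Real.pi/5), FF (c + y * Complex.I)‖
      ≤ 6 * Real.exp c * (Real.pi/5) := by
  have bound : ∀ y ∈ Set.uIoc (0:ℝ) (Real.pi/5),
      ‖FF (c + y * Complex.I)‖ ≤ 6 * Real.exp c := by
    intro y hy
    have hre : ((c:ℂ) + y * Complex.I).re = c := by simp
    have habs : ‖Complex.exp ((c:ℂ) + y * Complex.I)‖ = Real.exp c := by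
      rw [Complex.norm_exp, hre]
    have hle1 : ‖Complex.exp ((c:ℂ) + y * Complex.I)‖ ≤ 1 := by
      rw [habs]
      exact Real.exp_le_one_iff.mpr hc
    rw [FF, norm_mul, habs]
    exact mul_le_mul_of_nonneg_right (G_small hle1) (Real.exp_pos c).le
  have := intervalIntegral.norm_integral_le_of_norm_le_const bound
  calc ‖∫ y in (0:ℝ)..(Real.pi/5), FF (c + y * Complex.I)‖
      ≤ 6 * Real.exp c * |Real.pi/5 - 0| := this
    _ = 6 * Real.exp c * (Real.pi/5) := by
        rw [sub_zero, _root_.abs_of_nonneg pi5_nonneg]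

lemma small_int_g1c {ε : ℝ} (h0 : 0 < ε) (h1 : ε ≤ 1) :
    ‖∫ t in (0:ℝ)..ε, g1c t‖ ≤ 6 * ε := by
  have bound : ∀ t ∈ Set.uIoc (0:ℝ) ε, ‖g1c t‖ ≤ 6 := by
    intro t ht
    rw [Set.uIoc_of_le h0.le] at ht
    rw [g1c_eq ht.1.le]
    apply G_small
    rw [Complex.norm_real, Real.norm_eq_abs, _root_.abs_of_nonneg ht.1.le]
    linarith [ht.2]
  have := intervalIntegral.norm_integral_le_of_norm_le_const bound
  rw [sub_zero, _root_.abs_of_nonneg h0.le] at this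
  linarith

lemma small_int_g2c {ε : ℝ} (h0 : 0 < ε) (h1 : ε ≤ 1) :
    ‖∫ t in (0:ℝ)..ε, g2c t‖ ≤ 6 * ε := by
  have bound : ∀ t ∈ Set.uIoc (0:ℝ) ε, ‖g2c t‖ ≤ 6 := by
    intro t ht
    rw [Set.uIoc_of_le h0.le] at ht
    rw [g2c_eq ht.1.le, norm_mul, w5_norm, mul_one]
    apply G_small
    rw [norm_mul, w5_norm, mul_one, Complex.norm_real, Real.norm_eq_abs,
      _root_.abs_of_nonneg ht.1.le]
    linarith [ht.2]
  have := intervalIntegral.norm_integral_le_of_norm_le_const bound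
  rw [sub_zero, _root_.abs_of_nonneg h0.le] at this
  linarith

lemma key_identity {R : ℝ} (hR : 1 ≤ R) :
    (∫ t in (0:ℝ)..R, g1c t) - (∫ t in (0:ℝ)..R, g2c t)
      = - (Complex.I • ∫ y in (0:ℝ)..(Real.pi/5), FF ((Real.log R : ℝ) + y * Complex.I)) := by
  have hRpos : (0:ℝ) < R := lt_of_lt_of_le one_pos hR
  set X := (∫ t in (0:ℝ)..R, g1c t) - (∫ t in (0:ℝ)..R, g2c t)
      + Complex.I • ∫ y in (0:ℝ)..(Real.pi/5), FF ((Real.log R : ℝ) + y * Complex.I) with hX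
  have hbound : ∀ ε : ℝ, 0 < ε → ε ≤ 1 → ‖X‖ ≤ 18 * ε := by
    intro ε hε0 hε1
    set a := Real.log ε with ha
    set b := Real.log R with hb
    have hea : Real.exp a = ε := Real.exp_log hε0
    have heb : Real.exp b = R := Real.exp_log hRpos
    have hrect := rect a b
    rw [horiz1 a b, horiz2 a b, hea, heb] at hrect
    -- split the integrals from 0 to R at ε
    have hsub1 : Set.uIcc (0:ℝ) ε ⊆ Ici 0 := by
      rw [Set.uIcc_of_le hε0.le]; exact Icc_subset_Ici_self
    have hsub2 : Set.uIcc ε R ⊆ Ici 0 := by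
      rw [Set.uIcc_of_le (by linarith)]
      exact fun x hx => le_trans hε0.le hx.1
    have hint1a : IntervalIntegrable g1c volume 0 ε :=
      (g1c_contOn.mono hsub1).intervalIntegrable
    have hint1b : IntervalIntegrable g1c volume ε R :=
      (g1c_contOn.mono hsub2).intervalIntegrable
    have hint2a : IntervalIntegrable g2c volume 0 ε :=
      (g2c_contOn.mono hsub1).intervalIntegrable
    have hint2b : IntervalIntegrable g2c volume ε R :=
      (g2c_contOn.mono hsub2).intervalIntegrable
    have hsplit1 := intervalIntegral.integral_add_adjacent_intervals hint1a hint1b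
    have hsplit2 := intervalIntegral.integral_add_adjacent_intervals hint2a hint2b
    have hXeq : X = (∫ t in (0:ℝ)..ε, g1c t) - (∫ t in (0:ℝ)..ε, g2c t)
        + Complex.I • ∫ y in (0:ℝ)..(Real.pi/5), FF ((a:ℝ) + y * Complex.I) := by
      rw [hX, ← hsplit1, ← hsplit2]
      have : (∫ t in ε..R, g1c t) - (∫ t in ε..R, g2c t)
          + Complex.I • (∫ y in (0:ℝ)..(Real.pi/5), FF (b + y * Complex.I))
          = Complex.I • ∫ y in (0:ℝ)..(Real.pi/5), FF ((a:ℝ) + y * Complex.I) := by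
        have := hrect
        linear_combination this
      linear_combination this
    rw [hXeq]
    have e1 := small_int_g1c hε0 hε1
    have e2 := small_int_g2c hε0 hε1
    have e3 : ‖Complex.I • ∫ y in (0:ℝ)..(Real.pi/5), FF ((a:ℝ) + y * Complex.I)‖
        ≤ 6 * ε := by
      rw [norm_smul, Complex.norm_I, one_mul]
      have := vertA (c := a) (by rw [ha]; exact Real.log_nonpos hε0.le hε1)
      rw [hea] at this
      calc ‖∫ y in (0:ℝ)..(Real.pi/5), FF ((a:ℝ) + y * Complex.I)‖
          ≤ 6 * ε * (Real.pi/5) := this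
        _ ≤ 6 * ε * 1 := by
            apply mul_le_mul_of_nonneg_left pi5_le_one (by positivity)
        _ = 6 * ε := by ring
    calc ‖(∫ t in (0:ℝ)..ε, g1c t) - (∫ t in (0:ℝ)..ε, g2c t)
        + Complex.I • ∫ y in (0:ℝ)..(Real.pi/5), FF ((a:ℝ) + y * Complex.I)‖
        ≤ ‖(∫ t in (0:ℝ)..ε, g1c t) - (∫ t in (0:ℝ)..ε, g2c t)‖
          + ‖Complex.I • ∫ y in (0:ℝ)..(Real.pi/5), FF ((a:ℝ) + y * Complex.I)‖ :=
          norm_add_le _ _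
      _ ≤ (‖∫ t in (0:ℝ)..ε, g1c t‖ + ‖∫ t in (0:ℝ)..ε, g2c t‖) + 6 * ε := by
          have := norm_sub_le (∫ t in (0:ℝ)..ε, g1c t) (∫ t in (0:ℝ)..ε, g2c t)
          linarith
      _ ≤ 18 * ε := by linarith
  have hXzero : X = 0 := by
    rw [← norm_le_zero_iff]
    apply le_of_forall_pos_le_add
    intro δ hδ
    have hmin0 : 0 < min 1 (δ/18) := lt_min one_pos (by positivity)
    have := hbound (min 1 (δ/18)) hmin0 (min_le_left _ _)
    calc ‖X‖ ≤ 18 * min 1 (δ/18) := this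
      _ ≤ 18 * (δ/18) := by
          apply mul_le_mul_of_nonneg_left (min_le_right _ _) (by norm_num)
      _ = δ := by ring
      _ ≤ 0 + δ := by linarith
  rw [hX] at hXzero
  linear_combination hXzero

lemma tendsto_g1c_int :
    Tendsto (fun R : ℝ => ∫ t in (0:ℝ)..R, g1c t) atTop (𝓝 (((4/5) * BetaB : ℝ) : ℂ)) := by
  have : ∀ R : ℝ, (∫ t in (0:ℝ)..R, g1c t) = ((∫ x in (0:ℝ)..R, gR x : ℝ) : ℂ) := by
    intro R
    rw [← intervalIntegral.integral_ofReal]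
    rfl
  simp only [this]
  exact (Complex.continuous_ofReal.tendsto _).comp tendsto_gR

lemma tendsto_D :
    Tendsto (fun R : ℝ => (∫ t in (0:ℝ)..R, g1c t) - (∫ t in (0:ℝ)..R, g2c t)) atTop
      (𝓝 0) := by
  apply squeeze_zero_norm' (a := fun R : ℝ => CC * R ^ (-(1:ℝ)/2) * (Real.pi/5))
  · filter_upwards [eventually_ge_atTop 1] with R hR
    have hRpos : (0:ℝ) < R := lt_of_lt_of_le one_pos hR
    rw [key_identity hR, norm_neg, norm_smul, Complex.norm_I,
      one_mul]
    have := vertB (Real.log R)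
    have hexp : Real.exp (-(1/2) * Real.log R) = R ^ (-(1:ℝ)/2) := by
      rw [Real.rpow_def_of_pos hRpos]
      ring_nf
    rw [hexp] at this
    exact this
  · have h1 : Tendsto (fun R : ℝ => R ^ (-(1:ℝ)/2)) atTop (𝓝 0) := by
      have := tendsto_rpow_neg_atTop (y := (1:ℝ)/2) (by norm_num)
      exact this.congr fun R => by rw [neg_div]
    have := (h1.const_mul CC).mul_const (Real.pi/5)
    simpa using this

lemma tendsto_g2c_int :
    Tendsto (fun R : ℝ => ∫ t in (0:ℝ)..R, g2c t) atTop (𝓝 (((4/5) * BetaB : ℝ) : ℂ)) := by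
  have := tendsto_g1c_int.sub tendsto_D
  simpa using this

lemma seg2_eq {R : ℝ} (hR : 0 ≤ R) :
    (∫ r in (0:ℝ)..R, 2 * ((((r : ℂ) * w5) ^ 3 + 1) ^ ((1 : ℂ) / 2)) * w5)
      = (∫ t in (0:ℝ)..R, g2c t) + (4/5) * Complex.I * ((R ^ ((5:ℝ)/2) : ℝ) : ℂ) := by
  have hsub : Set.uIcc (0:ℝ) R ⊆ Ici 0 := by
    rw [Set.uIcc_of_le hR]; exact Icc_subset_Ici_self
  have hint2 : IntervalIntegrable g2c volume 0 R := (g2c_contOn.mono hsub).intervalIntegrable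
  have hint3 : IntervalIntegrable (fun r : ℝ => 2 * Complex.I * ((r ^ ((3:ℝ)/2) : ℝ) : ℂ))
      volume 0 R := by
    apply ContinuousOn.intervalIntegrable
    apply ContinuousOn.mul continuousOn_const
    apply Complex.continuous_ofReal.comp_continuousOn
    exact continuousOn_id.rpow_const fun x _ => Or.inr (by norm_num)
  have hadd := intervalIntegral.integral_add hint2 hint3
  have heq : ∀ r : ℝ, g2c r + 2 * Complex.I * ((r ^ ((3:ℝ)/2) : ℝ) : ℂ)
      = 2 * ((((r : ℂ) * w5) ^ 3 + 1) ^ ((1 : ℂ) / 2)) * w5 := by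
    intro r
    rw [g2c]
    ring
  simp only [heq] at hadd
  rw [hadd]
  congr 1
  rw [intervalIntegral.integral_const_mul, intervalIntegral.integral_ofReal,
    integral_rpow (Or.inl (by norm_num))]
  rw [Real.zero_rpow (by norm_num)]
  push_cast
  rw [show (3:ℝ)/2 + 1 = 5/2 by norm_num]
  ring


def w3 : ℂ := Complex.exp ((Real.pi : ℂ) * Complex.I / 3)

lemma w3_cube : w3 ^ (3:ℕ) = -1 := by
  rw [w3, exp_cube, show 3 * ((Real.pi : ℂ) * Complex.I / 3) = (Real.pi : ℂ) * Complex.I by ring,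
    Complex.exp_pi_mul_I]

lemma seg1_eq :
    (∫ r in (0:ℝ)..1, 2 * ((((r : ℂ) * w3) ^ 3 + 1) ^ ((1 : ℂ) / 2)) * w3)
      = ((2 * (BetaB/5) : ℝ) : ℂ) * w3 := by
  have hptw : ∀ r ∈ Set.uIcc (0:ℝ) 1,
      2 * ((((r : ℂ) * w3) ^ 3 + 1) ^ ((1 : ℂ) / 2)) * w3
        = (2 * w3) * ((((1 - r^3) ^ ((1:ℝ)/2) : ℝ)) : ℂ) := by
    intro r hr
    rw [Set.uIcc_of_le (by norm_num : (0:ℝ) ≤ 1)] at hr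
    have h3 : r^3 ≤ 1 := pow_le_one₀ hr.1 hr.2
    have hb : ((r : ℂ) * w3) ^ 3 + 1 = (((1 - r^3 : ℝ)) : ℂ) := by
      rw [mul_pow, w3_cube]
      push_cast
      ring
    rw [hb, Complex.ofReal_cpow (by linarith)]
    push_cast
    ring
  rw [intervalIntegral.integral_congr hptw, intervalIntegral.integral_const_mul,
    intervalIntegral.integral_ofReal, int_one_sub_cube]
  push_cast
  ring

lemma w3_eq : w3 = (1/2 : ℂ) + ((Real.sqrt 3 / 2 : ℝ) : ℂ) * Complex.I := by
  rw [w3, show (Real.pi : ℂ) * Complex.I / 3 = ((Real.pi/3 : ℝ) : ℂ) * Complex.I by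
      push_cast; ring,
    Complex.exp_mul_I, ← Complex.ofReal_cos, ← Complex.ofReal_sin,
    Real.cos_pi_div_three, Real.sin_pi_div_three]
  push_cast
  ring

theorem stmt11 :
    Tendsto (fun R : ℝ => Iseg R - (4 / 5) * Complex.I * ((R ^ ((5 : ℝ) / 2) : ℝ) : ℂ))
      atTop
      (𝓝 ((3 / 5 - (Real.sqrt 3 / 5 : ℝ) * Complex.I) * (BetaB : ℂ))) := by
  have hlim : Tendsto (fun R : ℝ => (∫ t in (0:ℝ)..R, g2c t) - ((2 * (BetaB/5) : ℝ) : ℂ) * w3)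
      atTop (𝓝 ((((4/5) * BetaB : ℝ) : ℂ) - ((2 * (BetaB/5) : ℝ) : ℂ) * w3)) :=
    tendsto_g2c_int.sub tendsto_const_nhds
  have htarget : (((4/5) * BetaB : ℝ) : ℂ) - ((2 * (BetaB/5) : ℝ) : ℂ) * w3
      = (3 / 5 - (Real.sqrt 3 / 5 : ℝ) * Complex.I) * (BetaB : ℂ) := by
    rw [w3_eq]
    push_cast
    ring
  rw [htarget] at hlim
  refine Tendsto.congr' ?_ hlim
  filter_upwards [eventually_ge_atTop 0] with R hR
  rw [Iseg]
  have h1 : (∫ r in (0:ℝ)..1,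
      2 * ((((r : ℂ) * Complex.exp ((Real.pi : ℂ) * Complex.I / 3)) ^ 3 + 1) ^ ((1 : ℂ) / 2))
        * Complex.exp ((Real.pi : ℂ) * Complex.I / 3)) = ((2 * (BetaB/5) : ℝ) : ℂ) * w3 :=
    seg1_eq
  have h2 : (∫ r in (0:ℝ)..R,
      2 * ((((r : ℂ) * Complex.exp ((Real.pi : ℂ) * Complex.I / 5)) ^ 3 + 1) ^ ((1 : ℂ) / 2))
        * Complex.exp ((Real.pi : ℂ) * Complex.I / 5))
      = (∫ t in (0:ℝ)..R, g2c t) + (4/5) * Complex.I * ((R ^ ((5:ℝ)/2) : ℝ) : ℂ) :=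
    seg2_eq hR
  rw [h1, h2]
  ring

end
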